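/- Let p_1, …, p_n be single-target pdfs such that every single-target evidence e_{σ,i} := ∫_E ℓ̃(σ, i, x) p_i(x) dμ(x) is finite. Then the FISST evidence satisfies (1/n!) ∫_{E^n} p(Z|X, n) · [∑_{ν ∈ Perm(Fin n)} ∏_{i=1}^n p_i(x_{ν(i)})] dμ^{⊗n}(X) = ∑_{σ} p(σ|n) (k(σ)!/V^{k(σ)}) ∏_{i=1}^n e_{σ,i}, the sum being over all data associations σ for n targets. (Normalization-constant computation η_{q^{(n)}} in the proof of Proposition 3.) -/
import Mathlib


open MeasureTheory
open scoped NNReal ENNReal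

/-- A data association for `n` targets and `m` measurements: a map
`σ : Fin n → Option (Fin m)` injective on `{i : σ i ≠ none}`. -/
def IsDataAssoc {n m : ℕ} (σ : Fin n → Option (Fin m)) : Prop :=
  ∀ i j : Fin n, σ i ≠ none → σ i = σ j → i = j

instance {n m : ℕ} : DecidablePred (IsDataAssoc (n := n) (m := m)) := fun _ =>
  by unfold IsDataAssoc; infer_instance

abbrev DataAssoc (n m : ℕ) := {σ : Fin n → Option (Fin m) // IsDataAssoc σ}

/-- Clutter count `k(σ) = m − #{i : σ i ≠ none}`. -/
def kclutter {n m : ℕ} (σ : Fin n → Option (Fin m)) : ℕ :=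
  m - (Finset.univ.filter fun i => σ i ≠ none).card

/-- `ℓ̃(σ, i, x) = ℓ(z_j, x)` if `σ i = some j`, and `= 1` if `σ i = none`. -/
def ltil {Z E : Type*} {n m : ℕ} (ℓ : Z → E → ℝ≥0) (z : Fin m → Z)
    (σ : Fin n → Option (Fin m)) (i : Fin n) (x : E) : ℝ≥0 :=
  (σ i).elim 1 fun j => ℓ (z j) x

/-- Prior association probability
`p(σ|n) = p_D^{m−k} (1−p_D)^{n−(m−k)} e^{−λV} (λV)^k / k!`. -/
noncomputable def pAssoc (pD lam V : ℝ) (n m k : ℕ) : ℝ≥0∞ :=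
  ENNReal.ofReal (pD ^ (m - k) * (1 - pD) ^ (n - (m - k)) *
    (Real.exp (-(lam * V)) * ((lam * V) ^ k / (Nat.factorial k))))

/-- Conditional likelihood `p(Z|σ, X, n) = (k(σ)!/V^{k(σ)}) ∏ i, ℓ̃(σ, i, x_i)`. -/
noncomputable def condLik {Z E : Type*} {n m : ℕ} (ℓ : Z → E → ℝ≥0) (z : Fin m → Z)
    (V : ℝ) (σ : DataAssoc n m) (X : Fin n → E) : ℝ≥0∞ :=
  ENNReal.ofReal ((Nat.factorial (kclutter σ.1)) / V ^ (kclutter σ.1)) *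
    ∏ i, (ltil ℓ z σ.1 i (X i) : ℝ≥0∞)

/-- Multi-target likelihood `p(Z|X, n) = ∑_σ p(σ|n) p(Z|σ, X, n)`. -/
noncomputable def mtLik {Z E : Type*} {m : ℕ} (ℓ : Z → E → ℝ≥0) (z : Fin m → Z)
    (pD lam V : ℝ) (n : ℕ) (X : Fin n → E) : ℝ≥0∞ :=
  ∑ σ : DataAssoc n m, pAssoc pD lam V n m (kclutter σ.1) * condLik ℓ z V σ X


lemma lintegral_pi_prod {E : Type*} [MeasurableSpace E] (μ : Measure E) [SigmaFinite μ] :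
    ∀ (n : ℕ) (f : Fin n → E → ℝ≥0∞), (∀ i, Measurable (f i)) →
      ∫⁻ X : Fin n → E, ∏ i, f i (X i) ∂(Measure.pi fun _ : Fin n => μ)
        = ∏ i, ∫⁻ x, f i x ∂μ
  | 0, f, _ => by
      simp [Measure.pi_univ, lintegral_const]
  | (n+1), f, hf => by
      have hprod : Measurable fun y : E × (Fin n → E) =>
          f 0 y.1 * ∏ j, f j.succ (y.2 j) := by
        refine ((hf 0).comp measurable_fst).mul ?_
        exact Finset.measurable_prod _ fun j _ =>
          (hf j.succ).comp ((measurable_pi_apply j).comp measurable_snd)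
      have key := (measurePreserving_piFinSuccAbove
          (fun _ : Fin (n+1) => μ) 0).lintegral_comp hprod
      have h1 : ∀ X : Fin n.succ → E,
          (fun y : E × (Fin n → E) => f 0 y.1 * ∏ j, f j.succ (y.2 j))
            ((MeasurableEquiv.piFinSuccAbove (fun _ => E) 0) X)
          = ∏ i, f i (X i) := by
        intro X
        simp [MeasurableEquiv.piFinSuccAbove, Fin.prod_univ_succ, Fin.succAbove, Fin.tail]
      rw [funext h1] at key
      rw [key,
        lintegral_prod_mul (f := f 0) (g := fun Y : Fin n → E => ∏ j, f j.succ (Y j))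
          (hf 0).aemeasurable
          (Finset.measurable_prod _ fun j _ =>
            (hf j.succ).comp (measurable_pi_apply j)).aemeasurable,
        lintegral_pi_prod μ n (fun j => f j.succ) (fun j => hf j.succ),
        Fin.prod_univ_succ]

/-- **Normalization-constant computation `η_{q^{(n)}}` in the proof of Proposition 3.**
For single-target pdfs `p 1, …, p n` with all single-target evidences
`e σ i = ∫ ℓ̃(σ,i,x) pᵢ(x) dμ(x)` finite, the FISST evidence satisfies
`(1/n!) ∫_{Eⁿ} p(Z|X,n) (∑_ν ∏ᵢ pᵢ(x_{ν i})) dμ^{⊗n}(X)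
  = ∑_σ p(σ|n) (k(σ)!/V^{k(σ)}) ∏ᵢ e σ i`. -/
theorem fisst_evidence_computation
    {E : Type*} [MeasurableSpace E] (μ : Measure E) [SigmaFinite μ]
    {Z : Type*} [MeasurableSpace Z] (m : ℕ) (z : Fin m → Z)
    (ℓ : Z → E → ℝ≥0) (hℓm : Measurable (Function.uncurry ℓ))
    (pD lam V : ℝ) (hpD : pD ∈ Set.Icc (0 : ℝ) 1) (hlam : 0 < lam) (hV : 0 < V)
    (n : ℕ) (p : Fin n → E → ℝ≥0)
    (hpm : ∀ i, Measurable (p i))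
    (hp1 : ∀ i, ∫⁻ x, (p i x : ℝ≥0∞) ∂μ = 1)
    (e : DataAssoc n m → Fin n → ℝ≥0∞)
    (he : ∀ σ i, e σ i = ∫⁻ x, (ltil ℓ z σ.1 i x : ℝ≥0∞) * (p i x : ℝ≥0∞) ∂μ)
    (he_fin : ∀ σ i, e σ i ≠ ∞) :
    (∫⁻ X : Fin n → E,
        mtLik ℓ z pD lam V n X *
          (∑ ν : Equiv.Perm (Fin n), ∏ i, (p i (X (ν i)) : ℝ≥0∞))
        ∂(Measure.pi fun _ : Fin n => μ)) / (Nat.factorial n : ℝ≥0∞) =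
      ∑ σ : DataAssoc n m,
        pAssoc pD lam V n m (kclutter σ.1) *
          (ENNReal.ofReal ((Nat.factorial (kclutter σ.1)) / V ^ (kclutter σ.1)) *
            ∏ i, e σ i) := by
  classical
  -- measurability of ltil
  have hltm : ∀ (σ : Fin n → Option (Fin m)) (i : Fin n),
      Measurable fun x => (ltil ℓ z σ i x : ℝ≥0∞) := by
    intro σ i
    cases h : σ i with
    | none => simp only [ltil, h, Option.elim]; exact measurable_const
    | some j =>
      simp only [ltil, h, Option.elim]
      exact (hℓm.comp measurable_prodMk_left).coe_nnreal_ennreal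
  -- abbreviation for the constant
  set A : DataAssoc n m → ℝ≥0∞ := fun σ =>
    pAssoc pD lam V n m (kclutter σ.1) *
      ENNReal.ofReal ((Nat.factorial (kclutter σ.1)) / V ^ (kclutter σ.1)) with hA
  -- composition of a data association with a permutation
  have hcomp : ∀ (σ : DataAssoc n m) (ν : Equiv.Perm (Fin n)),
      IsDataAssoc (σ.1 ∘ ν) := by
    intro σ ν i j hne heq
    exact ν.injective (σ.2 (ν i) (ν j) hne heq)
  have hkcomp : ∀ (σ : DataAssoc n m) (ν : Equiv.Perm (Fin n)),
      kclutter (σ.1 ∘ ν) = kclutter σ.1 := by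
    intro σ ν
    unfold kclutter
    congr 1
    refine Finset.card_bij (fun i _ => ν i) ?_ ?_ ?_
    · intro a ha; simp only [Finset.mem_filter, Finset.mem_univ, true_and] at ha ⊢
      exact ha
    · intro a _ b _ h; exact ν.injective h
    · intro b hb
      refine ⟨ν.symm b, ?_, by simp⟩
      simp only [Finset.mem_filter, Finset.mem_univ, true_and, Function.comp] at hb ⊢
      simpa using hb
  -- rewrite the integrand
  have hint : ∀ X : Fin n → E,
      mtLik ℓ z pD lam V n X *
        (∑ ν : Equiv.Perm (Fin n), ∏ i, (p i (X (ν i)) : ℝ≥0∞))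
      = ∑ σ : DataAssoc n m, ∑ ν : Equiv.Perm (Fin n),
          A σ * ∏ i, ((ltil ℓ z σ.1 i (X i) : ℝ≥0∞) * (p (ν.symm i) (X i) : ℝ≥0∞)) := by
    intro X
    rw [mtLik, Finset.sum_mul]
    refine Finset.sum_congr rfl fun σ _ => ?_
    rw [condLik, Finset.mul_sum]
    refine Finset.sum_congr rfl fun ν _ => ?_
    rw [Finset.prod_mul_distrib]
    have hperm : (∏ i, (p (ν.symm i) (X i) : ℝ≥0∞)) = ∏ i, (p i (X (ν i)) : ℝ≥0∞) := by
      rw [← Equiv.prod_comp ν (fun i => (p (ν.symm i) (X i) : ℝ≥0∞))]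
      simp
    rw [hA]
    rw [← hperm]
    ring
  -- measurability of each summand's product
  have hmeas : ∀ (σ : DataAssoc n m) (ν : Equiv.Perm (Fin n)),
      Measurable fun X : Fin n → E =>
        ∏ i, ((ltil ℓ z σ.1 i (X i) : ℝ≥0∞) * (p (ν.symm i) (X i) : ℝ≥0∞)) := by
    intro σ ν
    refine Finset.measurable_prod _ fun i _ => ?_
    exact ((hltm σ.1 i).comp (measurable_pi_apply i)).mul
      (((hpm (ν.symm i)).coe_nnreal_ennreal).comp (measurable_pi_apply i))
  -- compute the integral
  have hI : (∫⁻ X : Fin n → E,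
        mtLik ℓ z pD lam V n X *
          (∑ ν : Equiv.Perm (Fin n), ∏ i, (p i (X (ν i)) : ℝ≥0∞))
        ∂(Measure.pi fun _ : Fin n => μ))
      = ∑ σ : DataAssoc n m, ∑ ν : Equiv.Perm (Fin n),
          A σ * ∏ i, e ⟨σ.1 ∘ ν, hcomp σ ν⟩ i := by
    rw [lintegral_congr hint]
    rw [lintegral_finset_sum _ (fun σ _ => Finset.measurable_sum _ fun ν _ =>
      (hmeas σ ν).const_mul (A σ))]
    refine Finset.sum_congr rfl fun σ _ => ?_
    rw [lintegral_finset_sum _ (fun ν _ => (hmeas σ ν).const_mul (A σ))]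
    refine Finset.sum_congr rfl fun ν _ => ?_
    rw [lintegral_const_mul _ (hmeas σ ν)]
    congr 1
    rw [lintegral_pi_prod μ n
      (fun i x => (ltil ℓ z σ.1 i x : ℝ≥0∞) * (p (ν.symm i) x : ℝ≥0∞))
      (fun i => (hltm σ.1 i).mul ((hpm (ν.symm i)).coe_nnreal_ennreal))]
    rw [← Equiv.prod_comp ν
      (fun i => ∫⁻ x, (ltil ℓ z σ.1 i x : ℝ≥0∞) * (p (ν.symm i) x : ℝ≥0∞) ∂μ)]
    refine Finset.prod_congr rfl fun i _ => ?_
    rw [he ⟨σ.1 ∘ ν, hcomp σ ν⟩ i]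
    simp [ltil, Function.comp]
  -- reindex the double sum
  have hswap : (∑ σ : DataAssoc n m, ∑ ν : Equiv.Perm (Fin n),
        A σ * ∏ i, e ⟨σ.1 ∘ ν, hcomp σ ν⟩ i)
      = (Nat.factorial n : ℝ≥0∞) * ∑ σ : DataAssoc n m, A σ * ∏ i, e σ i := by
    rw [Finset.sum_comm]
    have hinner : ∀ ν : Equiv.Perm (Fin n),
        (∑ σ : DataAssoc n m, A σ * ∏ i, e ⟨σ.1 ∘ ν, hcomp σ ν⟩ i)
        = ∑ σ : DataAssoc n m, A σ * ∏ i, e σ i := by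
      intro ν
      refine Finset.sum_nbij' (fun σ => ⟨σ.1 ∘ ν, hcomp σ ν⟩)
        (fun σ => ⟨σ.1 ∘ ν.symm, hcomp σ ν.symm⟩) ?_ ?_ ?_ ?_ ?_
      · intro σ _; exact Finset.mem_univ _
      · intro σ _; exact Finset.mem_univ _
      · intro σ _; ext i; simp [Function.comp]
      · intro σ _; ext i; simp [Function.comp]
      · intro σ _
        have : A (⟨σ.1 ∘ ν, hcomp σ ν⟩ : DataAssoc n m) = A σ := by
          simp only [hA, hkcomp]
        rw [this]
    rw [Finset.sum_congr rfl fun ν _ => hinner ν, Finset.sum_const,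
      Finset.card_univ, Fintype.card_perm, Fintype.card_fin, nsmul_eq_mul]
  rw [hI, hswap, hA]
  rw [mul_comm, mul_div_assoc,
    ENNReal.div_self (by exact_mod_cast (Nat.factorial_pos n).ne') (ENNReal.natCast_ne_top _),
    mul_one]
  refine Finset.sum_congr rfl fun σ _ => ?_
  ring
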